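/- Let n < m be positive integers and let α₁,…,αₙ, β_{n+1},…,β_m be positive integers with α₁+⋯+αₙ = β_{n+1}+⋯+β_m. Set b₀ = 0 ∈ ℤ^m, b_i = e_i for i = 1,…,m, b_{m+1} = (α₁,…,αₙ,−β_{n+1},…,−β_m), a_i = (b_i,1) ∈ ℤ^{m+1}, and γ = (−1,−α₁,…,−αₙ,β_{n+1},…,β_m,1) ∈ ℤ^{m+2}. Let v ∈ ℤ^{m+2} be the vector with v_i = −1 for 0 ≤ i ≤ n and v_i = 0 for n+1 ≤ i ≤ m+1. Then Σ_{i=0}^{m+1} v_i a_i = −(1,…,1,0,…,0,n+1) (with 1 repeated n times and 0 repeated m−n times), and v has minimal negative support: for every c ∈ ℤ, the set nsupp(v + cγ) is not a proper subset of nsupp(v) = {0,1,…,n}. -/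
import Mathlib


/-- Σᵢ vᵢaᵢ = −(1,…,1,0,…,0,n+1) and v has minimal negative
support, with nsupp(v) = {0,…,n}. -/
theorem stmt_19 (n m : ℕ) (hn : 0 < n) (hnm : n < m)
    (α : Fin n → ℕ) (β : Fin (m - n) → ℕ)
    (hα : ∀ i, 0 < α i) (hβ : ∀ j, 0 < β j)
    (hsum : ∑ i, α i = ∑ j, β j)
    (b : Fin (m + 2) → Fin m → ℤ)
    (hb0 : b 0 = 0)
    (hbe : ∀ q : Fin (m + 2), ∀ hq1 : 1 ≤ (q : ℕ), (q : ℕ) ≤ m →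
      ∀ i : Fin m, b q i = if (i : ℕ) + 1 = (q : ℕ) then 1 else 0)
    (hbm : ∀ i : Fin m, b ⟨m + 1, by omega⟩ i =
      if h : (i : ℕ) < n then (α ⟨i, h⟩ : ℤ)
      else -(β ⟨(i : ℕ) - n, by have := i.isLt; omega⟩ : ℤ))
    (a : Fin (m + 2) → Fin (m + 1) → ℤ)
    (ha : ∀ q, a q = Fin.snoc (b q) 1)
    (γ : Fin (m + 2) → ℤ)
    (hγ : ∀ q : Fin (m + 2), γ q =
      if h0 : (q : ℕ) = 0 then -1
      else if h1 : (q : ℕ) ≤ n then -(α ⟨(q : ℕ) - 1, by omega⟩ : ℤ)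
      else if h2 : (q : ℕ) ≤ m then (β ⟨(q : ℕ) - 1 - n, by omega⟩ : ℤ)
      else 1)
    (v : Fin (m + 2) → ℤ)
    (hv : ∀ q : Fin (m + 2), v q = if (q : ℕ) ≤ n then -1 else 0) :
    (∑ q, v q • a q = -(fun j : Fin (m + 1) =>
        if (j : ℕ) < n then (1 : ℤ) else if (j : ℕ) = m then (n : ℤ) + 1 else 0)) ∧
      ({q : Fin (m + 2) | v q < 0} = {q : Fin (m + 2) | (q : ℕ) ≤ n}) ∧
      (∀ c : ℤ, ¬ ({q : Fin (m + 2) | v q + c * γ q < 0} ⊂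
        {q : Fin (m + 2) | v q < 0})) := by
  have haj : ∀ q (j : Fin (m+1)), a q j = if h : (j:ℕ) < m then b q ⟨j, h⟩ else 1 := by
    intro q j
    rw [ha]
    by_cases h : (j:ℕ) < m
    · rw [dif_pos h]
      have hj : j = Fin.castSucc ⟨(j:ℕ), h⟩ := by ext; simp
      conv_lhs => rw [hj]
      rw [Fin.snoc_castSucc]
    · have hj : j = Fin.last m := by ext; simp; omega
      rw [hj, Fin.snoc_last, dif_neg (by simp)]
  refine ⟨?_, ?_, ?_⟩
  · funext j
    have heval : (∑ q, v q • a q) j = ∑ q, v q * a q j := by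
      simp [Finset.sum_apply]
    rw [heval]
    by_cases hjm : (j:ℕ) < m
    · by_cases hjn : (j:ℕ) < n
      · -- sum = -1
        have hpt : ∀ q : Fin (m+2), v q * a q j =
            if q = (⟨(j:ℕ)+1, by omega⟩ : Fin (m+2)) then -1 else 0 := by
          intro q
          rw [haj, dif_pos hjm]
          by_cases heq : q = (⟨(j:ℕ)+1, by omega⟩ : Fin (m+2))
          · subst heq
            rw [if_pos rfl, hbe _ (by simp) (by simp; omega), hv]
            simp
            omega
          · rw [if_neg heq]
            have hne : (q:ℕ) ≠ (j:ℕ)+1 := fun h => heq (Fin.ext h)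
            rcases Nat.eq_zero_or_pos (q:ℕ) with hq0 | hq1
            · have hq : q = 0 := Fin.ext (by simpa using hq0)
              rw [hq, hb0]; simp
            · by_cases hqm : (q:ℕ) ≤ m
              · rw [hbe q hq1 hqm]
                rw [if_neg (show ¬((⟨(j:ℕ),hjm⟩:Fin m):ℕ)+1 = (q:ℕ) by simp; omega)]
                ring
              · rw [hv, if_neg (by omega)]; ring
        rw [Finset.sum_congr rfl (fun q _ => hpt q), Finset.sum_ite_eq' Finset.univ]
        simp [hjn]
      · -- sum = 0
        have hpt : ∀ q : Fin (m+2), v q * a q j = 0 := by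
          intro q
          rw [haj, dif_pos hjm]
          by_cases hqn : (q:ℕ) ≤ n
          · rcases Nat.eq_zero_or_pos (q:ℕ) with hq0 | hq1
            · have hq : q = 0 := Fin.ext (by simpa using hq0)
              rw [hq, hb0]; simp
            · rw [hbe q hq1 (by omega), if_neg (by simp; omega)]
              ring
          · rw [hv, if_neg hqn]; ring
        rw [Finset.sum_congr rfl (fun q _ => hpt q), Finset.sum_const_zero]
        have hne : (j:ℕ) ≠ m := by omega
        simp [hjn, hne]
    · -- j = last, a q j = 1
      have hjm' : (j:ℕ) = m := by have := j.isLt; omega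
      have hpt : ∀ q : Fin (m+2), v q * a q j = if (q:ℕ) ≤ n then (-1:ℤ) else 0 := by
        intro q
        rw [haj, dif_neg hjm, hv, mul_one]
      rw [Finset.sum_congr rfl (fun q _ => hpt q)]
      rw [Fin.sum_univ_eq_sum_range (fun i => if i ≤ n then (-1:ℤ) else 0)]
      have h1 : ∀ i, (if i ≤ n then (-1:ℤ) else 0) =
          if i ∈ Finset.range (n+1) then (-1:ℤ) else 0 := by
        intro i; simp [Finset.mem_range, Nat.lt_succ_iff]
      simp_rw [h1]
      rw [Finset.sum_ite_mem]
      have h2 : Finset.range (m+2) ∩ Finset.range (n+1) = Finset.range (n+1) := by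
        ext x; simp [Finset.mem_range]; omega
      rw [h2]
      simp [hjm']
      omega
  · ext q
    simp only [Set.mem_setOf_eq, hv]
    by_cases h : (q:ℕ) ≤ n <;> simp [h]
  · intro c hsub
    rcases lt_or_ge c 0 with hc | hc
    · -- m+1 is in LHS but not RHS
      have hm1 : (⟨m+1, by omega⟩ : Fin (m+2)) ∈ {q : Fin (m + 2) | v q + c * γ q < 0} := by
        simp only [Set.mem_setOf_eq]
        have hval : ((⟨m+1, by omega⟩ : Fin (m+2)) : ℕ) = m + 1 := rfl
        rw [hv, hγ, if_neg (by rw [hval]; omega), dif_neg (by rw [hval]; omega),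
          dif_neg (by rw [hval]; omega), dif_neg (by rw [hval]; omega)]
        omega
      have := hsub.subset hm1
      simp only [Set.mem_setOf_eq, hv] at this
      rw [if_neg (show ¬ ((⟨m+1, by omega⟩ : Fin (m+2)) : ℕ) ≤ n by omega)] at this
      omega
    · obtain ⟨q, hq1, hq2⟩ := Set.exists_of_ssubset hsub
      simp only [Set.mem_setOf_eq] at hq1 hq2
      rw [hv] at hq1
      have hqn : (q:ℕ) ≤ n := by by_contra h; rw [if_neg h] at hq1; omega
      have hγq : γ q ≤ 0 := by
        rw [hγ]
        by_cases h0 : (q:ℕ) = 0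
        · rw [dif_pos h0]; omega
        · rw [dif_neg h0, dif_pos hqn]; simp
      apply hq2
      rw [hv, if_pos hqn]
      nlinarith
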